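/- Let A be a commutative ℚ-algebra with derivation d, let N ≥ 1, and let z, z̄ ∈ A[w,w⁻¹] have supports contained in {−N, …, 1} and {−1, …, N} respectively, satisfying the string equation {z, z̄} = 1. For 1 ≤ k ≤ N+1 set H_k := (z^k)₊ + (1/2)·(z^k)₀. Then {H_k, z̄} has support contained in {−1, …, N}; i.e., assuming the string equation, the t_k-flows with 1 ≤ k ≤ N+1 preserve the polynomial reduction of z̄. -/

import Mathlib

/-! Since `f ↦ {f, z̄}` is a derivation, the string equation gives `{z^k, z̄} = k z^(k-1)`,
which has degree at most `k - 1 ≤ N`. Write `H_k = z^k - ((z^k)₋ + ½ (z^k)₀)`; the second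
summand has degree at most `0`. The bracket adds degrees (`∂_w` lowers them by one, which the
factor `w` restores, and `d` does not raise them), so `{H_k, z̄}` has degree at most `N`.
In the same way `H_k` has order `≥ 0` and `z̄` order `≥ -1`, so `{H_k, z̄}` has order `≥ -1`. -/

open LaurentPolynomial

/-- The derivation `d : A → A` extended coefficientwise to Laurent polynomials
(so that `d w = 0`). -/
noncomputable def dmap {A : Type*} [CommRing A] (d : A → A) (f : LaurentPolynomial A) :
    LaurentPolynomial A :=
  f.coeff.sum fun n a => C (d a) * T n

/-- The formal derivative `∂_w` on Laurent polynomials. -/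
noncomputable def wderiv {A : Type*} [CommRing A] (f : LaurentPolynomial A) :
    LaurentPolynomial A :=
  f.coeff.sum fun n a => C (n • a) * T (n - 1)

/-- The Lax–Poisson bracket `{f,g} = w·(∂_w f)·(d g) − w·(d f)·(∂_w g)`. -/
noncomputable def lax {A : Type*} [CommRing A] (d : A → A) (f g : LaurentPolynomial A) :
    LaurentPolynomial A :=
  T 1 * wderiv f * dmap d g - T 1 * dmap d f * wderiv g

/-- `f₊`, the strictly positive-degree part of a Laurent polynomial. -/
noncomputable def posPart {A : Type*} [CommRing A] (f : LaurentPolynomial A) :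
    LaurentPolynomial A :=
  f.coeff.sum fun n a => if 0 < n then C a * T n else 0

/-- `f₋`, the strictly negative-degree part of a Laurent polynomial. -/
noncomputable def negPart {A : Type*} [CommRing A] (f : LaurentPolynomial A) :
    LaurentPolynomial A :=
  f.coeff.sum fun n a => if n < 0 then C a * T n else 0

namespace LaurentPolynomial

variable {R : Type*}

section Semiring

variable [Semiring R] {f g : R[T;T⁻¹]} {a b : ℤ}

theorem add_mem_upperBounds_support_mul (hf : a ∈ upperBounds (f.coeff.support : Set ℤ))
    (hg : b ∈ upperBounds (g.coeff.support : Set ℤ)) :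
    a + b ∈ upperBounds ((f * g).coeff.support : Set ℤ) :=
  upperBounds_mono_set (by exact_mod_cast AddMonoidAlgebra.support_coeff_mul_subset f g)
    (add_mem_upperBounds_add hf hg)

theorem add_mem_lowerBounds_support_mul (hf : a ∈ lowerBounds (f.coeff.support : Set ℤ))
    (hg : b ∈ lowerBounds (g.coeff.support : Set ℤ)) :
    a + b ∈ lowerBounds ((f * g).coeff.support : Set ℤ) :=
  lowerBounds_mono_set (by exact_mod_cast AddMonoidAlgebra.support_coeff_mul_subset f g)
    (add_mem_lowerBounds_add hf hg)

theorem mem_upperBounds_support_add (hf : a ∈ upperBounds (f.coeff.support : Set ℤ))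
    (hg : a ∈ upperBounds (g.coeff.support : Set ℤ)) :
    a ∈ upperBounds ((f + g).coeff.support : Set ℤ) := by
  refine upperBounds_mono_set (Finset.coe_subset.2 Finsupp.support_add) ?_
  rw [Finset.coe_union, upperBounds_union]
  exact ⟨hf, hg⟩

theorem mem_lowerBounds_support_add (hf : a ∈ lowerBounds (f.coeff.support : Set ℤ))
    (hg : a ∈ lowerBounds (g.coeff.support : Set ℤ)) :
    a ∈ lowerBounds ((f + g).coeff.support : Set ℤ) := by
  refine lowerBounds_mono_set (Finset.coe_subset.2 Finsupp.support_add) ?_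
  rw [Finset.coe_union, lowerBounds_union]
  exact ⟨hf, hg⟩

theorem mem_upperBounds_support_C_mul_T (r : R) (n : ℤ) :
    n ∈ upperBounds ((C r * T n).coeff.support : Set ℤ) :=
  fun _ hm => (Finset.mem_singleton.1 (support_C_mul_T r n hm)).le

theorem mem_lowerBounds_support_C_mul_T (r : R) (n : ℤ) :
    n ∈ lowerBounds ((C r * T n).coeff.support : Set ℤ) :=
  fun _ hm => (Finset.mem_singleton.1 (support_C_mul_T r n hm)).ge

theorem mul_mem_upperBounds_support_pow (hf : a ∈ upperBounds (f.coeff.support : Set ℤ)) :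
    ∀ n : ℕ, n * a ∈ upperBounds ((f ^ n).coeff.support : Set ℤ)
  | 0 => by simpa using mem_upperBounds_support_C_mul_T (1 : R) 0
  | n + 1 => by
    rw [pow_succ, Nat.cast_succ, add_one_mul]
    exact add_mem_upperBounds_support_mul (mul_mem_upperBounds_support_pow hf n) hf

theorem mem_upperBounds_support_natCast_mul (n : ℕ)
    (hf : a ∈ upperBounds (f.coeff.support : Set ℤ)) :
    a ∈ upperBounds (((n : R[T;T⁻¹]) * f).coeff.support : Set ℤ) := by
  simpa using add_mem_upperBounds_support_mul (mem_upperBounds_support_C_mul_T (n : R) 0) hf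

theorem coeff_finsuppSum_C_mul_T (f : R[T;T⁻¹]) (g : ℤ → R → R) (hg : ∀ n, g n 0 = 0) (m : ℤ) :
    (f.coeff.sum fun n a => C (g n a) * T n).coeff m = g m (f.coeff m) := by
  simp only [← single_eq_C_mul_T, AddMonoidAlgebra.coeff_finsuppSum, AddMonoidAlgebra.coeff_single,
    Finsupp.sum_apply, Finsupp.single_apply]
  rw [Finsupp.sum, Finset.sum_ite_eq']
  split_ifs with h
  · rfl
  · rw [Finsupp.notMem_support_iff.1 h, hg]

theorem leibniz_of_C_mul_T {D : R[T;T⁻¹] → R[T;T⁻¹]} (hD_add : ∀ f g, D (f + g) = D f + D g)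
    (hD : ∀ (r s : R) (m n : ℤ),
      D (C r * T m * (C s * T n)) = C r * T m * D (C s * T n) + D (C r * T m) * (C s * T n))
    (f g : R[T;T⁻¹]) : D (f * g) = f * D g + D f * g := by
  induction f using LaurentPolynomial.induction_on' with
  | add p q hp hq => rw [add_mul, hD_add, hp, hq, hD_add]; simp only [add_mul]; abel
  | C_mul_T m r =>
    induction g using LaurentPolynomial.induction_on' with
    | add p q hp hq => rw [mul_add, hD_add, hp, hq, hD_add]; simp only [mul_add]; abel
    | C_mul_T n s => exact hD r s m n

end Semiring

section Ring

variable [Ring R] {f g : R[T;T⁻¹]} {a : ℤ}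

theorem mem_upperBounds_support_sub (hf : a ∈ upperBounds (f.coeff.support : Set ℤ))
    (hg : a ∈ upperBounds (g.coeff.support : Set ℤ)) :
    a ∈ upperBounds ((f - g).coeff.support : Set ℤ) := by
  refine upperBounds_mono_set (Finset.coe_subset.2 Finsupp.support_sub) ?_
  rw [Finset.coe_union, upperBounds_union]
  exact ⟨hf, hg⟩

theorem mem_lowerBounds_support_sub (hf : a ∈ lowerBounds (f.coeff.support : Set ℤ))
    (hg : a ∈ lowerBounds (g.coeff.support : Set ℤ)) :
    a ∈ lowerBounds ((f - g).coeff.support : Set ℤ) := by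
  refine lowerBounds_mono_set (Finset.coe_subset.2 Finsupp.support_sub) ?_
  rw [Finset.coe_union, lowerBounds_union]
  exact ⟨hf, hg⟩

end Ring

theorem C_mul_T_mul_C_mul_T [CommSemiring R] (r s : R) (m n : ℤ) :
    C r * T m * (C s * T n) = C (r * s) * T (m + n) := by
  rw [T_add, map_mul]; ring

end LaurentPolynomial

section LaxBracket

variable {A : Type*} [CommRing A]

theorem coeff_posPart (f : A[T;T⁻¹]) (n : ℤ) :
    (posPart f).coeff n = if 0 < n then f.coeff n else 0 := by
  have : (fun n a => if 0 < n then C a * T n else 0 : ℤ → A → A[T;T⁻¹]) =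
      fun n a => C (if 0 < n then a else 0) * T n := by
    ext n a; split_ifs <;> simp
  rw [_root_.posPart, this, coeff_finsuppSum_C_mul_T f _ (fun _ => by simp)]

theorem coeff_negPart (f : A[T;T⁻¹]) (n : ℤ) :
    (negPart f).coeff n = if n < 0 then f.coeff n else 0 := by
  have : (fun n a => if n < 0 then C a * T n else 0 : ℤ → A → A[T;T⁻¹]) =
      fun n a => C (if n < 0 then a else 0) * T n := by
    ext n a; split_ifs <;> simp
  rw [_root_.negPart, this, coeff_finsuppSum_C_mul_T f _ (fun _ => by simp)]

theorem posPart_add_negPart_add_C_coeff_zero (f : A[T;T⁻¹]) :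
    posPart f + negPart f + C (f.coeff 0) = f := by
  ext n
  simp only [AddMonoidAlgebra.coeff_add, Finsupp.add_apply, coeff_posPart, coeff_negPart,
    ← single_eq_C, AddMonoidAlgebra.coeff_single, Finsupp.single_apply]
  rcases lt_trichotomy n 0 with hn | rfl | hn
  · simp [hn, hn.not_gt, hn.ne']
  · simp
  · simp [hn, hn.not_gt, hn.ne]

theorem one_mem_lowerBounds_support_posPart (f : A[T;T⁻¹]) :
    (1 : ℤ) ∈ lowerBounds ((posPart f).coeff.support : Set ℤ) := fun n hn => by
  by_contra h
  simp [coeff_posPart, show ¬ 0 < n by omega] at hn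

theorem neg_one_mem_upperBounds_support_negPart (f : A[T;T⁻¹]) :
    (-1 : ℤ) ∈ upperBounds ((negPart f).coeff.support : Set ℤ) := fun n hn => by
  by_contra h
  simp [coeff_negPart, show ¬ n < 0 by omega] at hn

theorem posPart_add_C (f : A[T;T⁻¹]) (r : A) :
    posPart f + C r = f - (negPart f + C (f.coeff 0 - r)) := by
  rw [map_sub]
  linear_combination posPart_add_negPart_add_C_coeff_zero f

theorem zero_mem_lowerBounds_support_posPart_add_C (f : A[T;T⁻¹]) (r : A) :
    (0 : ℤ) ∈ lowerBounds ((posPart f + C r).coeff.support : Set ℤ) :=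
  mem_lowerBounds_support_add
    (lowerBounds_mono_mem zero_le_one (one_mem_lowerBounds_support_posPart f))
    (by simpa using mem_lowerBounds_support_C_mul_T r 0)

theorem zero_mem_upperBounds_support_negPart_add_C (f : A[T;T⁻¹]) (r : A) :
    (0 : ℤ) ∈ upperBounds ((negPart f + C r).coeff.support : Set ℤ) :=
  mem_upperBounds_support_add
    (upperBounds_mono_mem (by norm_num) (neg_one_mem_upperBounds_support_negPart f))
    (by simpa using mem_upperBounds_support_C_mul_T r 0)

theorem coeff_wderiv (f : A[T;T⁻¹]) (n : ℤ) : (wderiv f).coeff n = (n + 1) • f.coeff (n + 1) := by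
  simp only [wderiv, ← single_eq_C_mul_T, AddMonoidAlgebra.coeff_finsuppSum,
    AddMonoidAlgebra.coeff_single, Finsupp.sum_apply, Finsupp.single_apply, sub_eq_iff_eq_add]
  rw [Finsupp.sum, Finset.sum_ite_eq']
  split_ifs with h
  · rfl
  · rw [Finsupp.notMem_support_iff.1 h, smul_zero]

theorem wderiv_C_mul_T (r : A) (n : ℤ) : wderiv (C r * T n) = C (n • r) * T (n - 1) := by
  rw [← single_eq_C_mul_T, wderiv, AddMonoidAlgebra.coeff_single,
    Finsupp.sum_single_index (by simp)]

theorem wderiv_add (f g : A[T;T⁻¹]) : wderiv (f + g) = wderiv f + wderiv g := by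
  ext n
  simp only [coeff_wderiv, AddMonoidAlgebra.coeff_add, Finsupp.add_apply, smul_add]

theorem wderiv_sub (f g : A[T;T⁻¹]) : wderiv (f - g) = wderiv f - wderiv g := by
  ext n
  simp only [coeff_wderiv, AddMonoidAlgebra.coeff_sub, Finsupp.sub_apply, smul_sub]

theorem wderiv_mul (f g : A[T;T⁻¹]) : wderiv (f * g) = f * wderiv g + wderiv f * g := by
  refine leibniz_of_C_mul_T wderiv_add (fun r s m n => ?_) f g
  rw [C_mul_T_mul_C_mul_T, wderiv_C_mul_T, wderiv_C_mul_T, wderiv_C_mul_T, C_mul_T_mul_C_mul_T,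
    C_mul_T_mul_C_mul_T, show m + (n - 1) = m + n - 1 by ring, show m - 1 + n = m + n - 1 by ring,
    ← add_mul, ← map_add, add_smul, mul_smul_comm, smul_mul_assoc, add_comm]

theorem mem_support_wderiv {f : A[T;T⁻¹]} {n : ℤ} (hn : n ∈ (wderiv f).coeff.support) :
    n + 1 ∈ f.coeff.support := by
  rw [Finsupp.mem_support_iff, coeff_wderiv] at hn
  exact Finsupp.mem_support_iff.2 (right_ne_zero_of_smul hn)

theorem sub_one_mem_upperBounds_support_wderiv {f : A[T;T⁻¹]} {a : ℤ}
    (hf : a ∈ upperBounds (f.coeff.support : Set ℤ)) :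
    a - 1 ∈ upperBounds ((wderiv f).coeff.support : Set ℤ) :=
  fun _ hn => by linarith [hf (mem_support_wderiv hn)]

theorem sub_one_mem_lowerBounds_support_wderiv {f : A[T;T⁻¹]} {a : ℤ}
    (hf : a ∈ lowerBounds (f.coeff.support : Set ℤ)) :
    a - 1 ∈ lowerBounds ((wderiv f).coeff.support : Set ℤ) :=
  fun _ hn => by linarith [hf (mem_support_wderiv hn)]

variable (D : A →+ A)

theorem coeff_dmap (f : A[T;T⁻¹]) (n : ℤ) : (dmap D f).coeff n = D (f.coeff n) :=
  coeff_finsuppSum_C_mul_T f _ (fun _ => map_zero D) n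

theorem dmap_C_mul_T (r : A) (n : ℤ) : dmap D (C r * T n) = C (D r) * T n := by
  rw [← single_eq_C_mul_T, dmap, AddMonoidAlgebra.coeff_single,
    Finsupp.sum_single_index (by simp)]

theorem dmap_add (f g : A[T;T⁻¹]) : dmap D (f + g) = dmap D f + dmap D g := by
  ext n
  simp only [coeff_dmap, AddMonoidAlgebra.coeff_add, Finsupp.add_apply, map_add]

theorem dmap_sub (f g : A[T;T⁻¹]) : dmap D (f - g) = dmap D f - dmap D g := by
  ext n
  simp only [coeff_dmap, AddMonoidAlgebra.coeff_sub, Finsupp.sub_apply, map_sub]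

theorem dmap_mul (hD : ∀ a b, D (a * b) = a * D b + D a * b) (f g : A[T;T⁻¹]) :
    dmap D (f * g) = f * dmap D g + dmap D f * g := by
  refine leibniz_of_C_mul_T (dmap_add D) (fun r s m n => ?_) f g
  rw [C_mul_T_mul_C_mul_T, dmap_C_mul_T, dmap_C_mul_T, dmap_C_mul_T, C_mul_T_mul_C_mul_T,
    C_mul_T_mul_C_mul_T, ← add_mul, ← map_add, hD]

theorem support_dmap_subset (f : A[T;T⁻¹]) : (dmap D f).coeff.support ⊆ f.coeff.support :=
  fun n hn => Finsupp.mem_support_iff.2 fun h =>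
    Finsupp.mem_support_iff.1 hn (by rw [coeff_dmap, h, map_zero])

theorem lax_sub_left (f g h : A[T;T⁻¹]) : lax D (f - g) h = lax D f h - lax D g h := by
  simp only [lax, dmap_sub, wderiv_sub]
  ring

theorem lax_mul_left (hD : ∀ a b, D (a * b) = a * D b + D a * b) (f g h : A[T;T⁻¹]) :
    lax D (f * g) h = f * lax D g h + g * lax D f h := by
  simp only [lax, dmap_mul D hD, wderiv_mul]
  ring

theorem lax_one_left (hD : ∀ a b, D (a * b) = a * D b + D a * b) (h : A[T;T⁻¹]) :
    lax D 1 h = 0 := by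
  simpa using lax_mul_left D hD 1 1 h

theorem lax_pow_left (hD : ∀ a b, D (a * b) = a * D b + D a * b) (f h : A[T;T⁻¹]) :
    ∀ n : ℕ, lax D (f ^ n) h = n * f ^ (n - 1) * lax D f h
  | 0 => by simp [lax_one_left D hD]
  | n + 1 => by
    rw [pow_succ, lax_mul_left D hD, lax_pow_left hD f h n]
    rcases n with _ | n
    · simp
    · simp only [Nat.add_sub_cancel]
      push_cast
      ring

theorem add_mem_upperBounds_support_lax {f g : A[T;T⁻¹]} {a b : ℤ}
    (hf : a ∈ upperBounds (f.coeff.support : Set ℤ))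
    (hg : b ∈ upperBounds (g.coeff.support : Set ℤ)) :
    a + b ∈ upperBounds ((lax D f g).coeff.support : Set ℤ) := by
  have hT : (1 : ℤ) ∈ upperBounds ((T 1 : A[T;T⁻¹]).coeff.support : Set ℤ) := by
    simpa using mem_upperBounds_support_C_mul_T (1 : A) 1
  have hdf := upperBounds_mono_set (Finset.coe_subset.2 (support_dmap_subset D f)) hf
  have hdg := upperBounds_mono_set (Finset.coe_subset.2 (support_dmap_subset D g)) hg
  refine mem_upperBounds_support_sub ?_ ?_
  · convert add_mem_upperBounds_support_mul (add_mem_upperBounds_support_mul hT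
      (sub_one_mem_upperBounds_support_wderiv hf)) hdg using 1
    ring
  · convert add_mem_upperBounds_support_mul (add_mem_upperBounds_support_mul hT hdf)
      (sub_one_mem_upperBounds_support_wderiv hg) using 1
    ring

theorem add_mem_lowerBounds_support_lax {f g : A[T;T⁻¹]} {a b : ℤ}
    (hf : a ∈ lowerBounds (f.coeff.support : Set ℤ))
    (hg : b ∈ lowerBounds (g.coeff.support : Set ℤ)) :
    a + b ∈ lowerBounds ((lax D f g).coeff.support : Set ℤ) := by
  have hT : (1 : ℤ) ∈ lowerBounds ((T 1 : A[T;T⁻¹]).coeff.support : Set ℤ) := by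
    simpa using mem_lowerBounds_support_C_mul_T (1 : A) 1
  have hdf := lowerBounds_mono_set (Finset.coe_subset.2 (support_dmap_subset D f)) hf
  have hdg := lowerBounds_mono_set (Finset.coe_subset.2 (support_dmap_subset D g)) hg
  refine mem_lowerBounds_support_sub ?_ ?_
  · convert add_mem_lowerBounds_support_mul (add_mem_lowerBounds_support_mul hT
      (sub_one_mem_lowerBounds_support_wderiv hf)) hdg using 1
    ring
  · convert add_mem_lowerBounds_support_mul (add_mem_lowerBounds_support_mul hT hdf)
      (sub_one_mem_lowerBounds_support_wderiv hg) using 1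
    ring

end LaxBracket

theorem t_flow_preserves_poly_reduction_of_zbar_general {A : Type*} [CommRing A] [Algebra ℚ A]
    (d : A → A)
    (hd_add : ∀ a b : A, d (a + b) = d a + d b)
    (hd_mul : ∀ a b : A, d (a * b) = a * d b + d a * b)
    (N k : ℕ) (hk2 : k ≤ N + 1)
    (z zbar : LaurentPolynomial A)
    (hz : z.coeff.support ⊆ Finset.Icc (-(N : ℤ)) 1)
    (hzbar : zbar.coeff.support ⊆ Finset.Icc (-1 : ℤ) (N : ℤ))
    (hstring : lax d z zbar = 1)
    (Hk : LaurentPolynomial A)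
    (hHk : Hk = posPart (z ^ k) + C ((1/2 : ℚ) • ((z ^ k).coeff (0 : ℤ)))) :
    (lax d Hk zbar).coeff.support ⊆ Finset.Icc (-1 : ℤ) (N : ℤ) := by
  obtain ⟨D, rfl⟩ : ∃ D : A →+ A, ⇑D = d := ⟨AddMonoidHom.mk' d hd_add, rfl⟩
  have hz_le : (1 : ℤ) ∈ upperBounds (z.coeff.support : Set ℤ) :=
    fun n hn => (Finset.mem_Icc.1 (hz hn)).2
  have hzbar_le : (N : ℤ) ∈ upperBounds (zbar.coeff.support : Set ℤ) :=
    fun n hn => (Finset.mem_Icc.1 (hzbar hn)).2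
  have hzbar_ge : (-1 : ℤ) ∈ lowerBounds (zbar.coeff.support : Set ℤ) :=
    fun n hn => (Finset.mem_Icc.1 (hzbar hn)).1
  subst hHk
  refine fun n hn => Finset.mem_Icc.2 ⟨?_, ?_⟩
  · simpa only [zero_add] using add_mem_lowerBounds_support_lax D
      (zero_mem_lowerBounds_support_posPart_add_C _ _) hzbar_ge hn
  · rw [posPart_add_C, lax_sub_left, lax_pow_left D hd_mul, hstring, mul_one] at hn
    refine mem_upperBounds_support_sub ?_ ?_ hn
    · exact upperBounds_mono_mem (by omega)
        (mem_upperBounds_support_natCast_mul k (mul_mem_upperBounds_support_pow hz_le (k - 1)))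
    · simpa only [zero_add] using add_mem_upperBounds_support_lax D
        (zero_mem_upperBounds_support_negPart_add_C _ _) hzbar_le

/-- assuming the string equation `{z, z̄} = 1`, the `t_k`-flows with
`1 ≤ k ≤ N+1` preserve the polynomial reduction of `z̄`: with
`H_k = (z^k)₊ + (1/2)(z^k)₀`, the bracket `{H_k, z̄}` has support in `{−1,…,N}`. -/
theorem t_flow_preserves_poly_reduction_of_zbar {A : Type*} [CommRing A] [Algebra ℚ A]
    (d : A → A)
    (hd_add : ∀ a b : A, d (a + b) = d a + d b)
    (hd_mul : ∀ a b : A, d (a * b) = a * d b + d a * b)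
    (N k : ℕ) (hN : 1 ≤ N) (hk1 : 1 ≤ k) (hk2 : k ≤ N + 1)
    (z zbar : LaurentPolynomial A)
    (hz : z.coeff.support ⊆ Finset.Icc (-(N : ℤ)) 1)
    (hzbar : zbar.coeff.support ⊆ Finset.Icc (-1 : ℤ) (N : ℤ))
    (hstring : lax d z zbar = 1)
    (Hk : LaurentPolynomial A)
    (hHk : Hk = posPart (z ^ k) + C ((1/2 : ℚ) • ((z ^ k).coeff (0 : ℤ)))) :
    (lax d Hk zbar).coeff.support ⊆ Finset.Icc (-1 : ℤ) (N : ℤ) :=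
  t_flow_preserves_poly_reduction_of_zbar_general d hd_add hd_mul N k hk2 z zbar hz hzbar hstring Hk
    hHk
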